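/- Let φ : S → T be a homomorphism of inverse semigroups, let e, f ∈ E(S), s ∈ S, t ∈ T, and let χ be a semi-character of E(S) with χ(s*·s) = true, χ(f) = true, and χ(s*·e·s) = true. Suppose there exists v ∈ T with v ≤ φ(s) and v ≤ t such that some x ∈ E(S) satisfies χ(x) = true and φ(x) ≤ v*·v. Then there exists s' ∈ S with s' ≤ s, s' = e·s'·f, χ(s'*·s') = true, and φ(s') ≤ t. -/

import Mathlib

class InverseSemigroup (S : Type*) extends Semigroup S, StarMul S where
  mul_star_mul_self : ∀ s : S, s * star s * s = s
  star_mul_star_self : ∀ s : S, star s * s * star s = star s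
  idem_comm : ∀ e f : S, e * e = e → f * f = f → e * f = f * e

namespace InverseSemigroup

variable {S : Type*} [InverseSemigroup S]

lemma idem_star_mul (s : S) : (star s * s) * (star s * s) = star s * s := by
  calc (star s * s) * (star s * s) = star s * (s * star s * s) := by
        simp only [mul_assoc]
    _ = star s * s := by rw [mul_star_mul_self]

lemma mul_star_idem (s : S) : (s * star s) * (s * star s) = s * star s := by
  calc (s * star s) * (s * star s) = s * (star s * s * star s) := by
        simp only [mul_assoc]
    _ = s * star s := by rw [star_mul_star_self]

lemma idem_mul {e f : S} (he : e * e = e) (hf : f * f = f) :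
    (e * f) * (e * f) = e * f := by
  have hc : f * e = e * f := idem_comm f e hf he
  calc (e * f) * (e * f) = e * (f * e) * f := by simp only [mul_assoc]
    _ = e * (e * f) * f := by rw [hc]
    _ = (e * e) * (f * f) := by simp only [mul_assoc]
    _ = e * f := by rw [he, hf]

lemma idem_conj {e : S} (he : e * e = e) (s : S) :
    (star s * e * s) * (star s * e * s) = star s * e * s := by
  have hf : (s * star s) * (s * star s) = s * star s := mul_star_idem s
  have hc : e * (s * star s) = (s * star s) * e := idem_comm e _ he hf
  calc (star s * e * s) * (star s * e * s)
      = star s * (e * (s * star s)) * (e * s) := by simp only [mul_assoc]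
    _ = star s * ((s * star s) * e) * (e * s) := by rw [hc]
    _ = star s * (s * star s) * (e * e) * s := by simp only [mul_assoc]
    _ = star s * (s * star s) * e * s := by rw [he]
    _ = (star s * s * star s) * e * s := by simp only [mul_assoc]
    _ = star s * e * s := by rw [star_mul_star_self]

lemma conj_mul {e f : S} (_he : e * e = e) (hf : f * f = f) (s : S) :
    (star s * e * s) * (star s * f * s) = star s * (e * f) * s := by
  have hss : (s * star s) * (s * star s) = s * star s := mul_star_idem s
  have hc : (s * star s) * f = f * (s * star s) := idem_comm _ _ hss hf
  calc (star s * e * s) * (star s * f * s)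
      = star s * e * ((s * star s) * f) * s := by simp only [mul_assoc]
    _ = star s * e * (f * (s * star s)) * s := by rw [hc]
    _ = star s * (e * f) * (s * star s * s) := by simp only [mul_assoc]
    _ = star s * (e * f) * s := by rw [mul_star_mul_self]

lemma conj_ss (s : S) : star s * (s * star s) * s = star s * s := by
  calc star s * (s * star s) * s = (star s * s * star s) * s := by
        simp only [mul_assoc]
    _ = star s * s := by rw [star_mul_star_self]

end InverseSemigroup

open InverseSemigroup

/-- The natural partial order on an inverse semigroup: `s ≤ t` iff `s = t·s*·s`. -/
def nle {S : Type*} [InverseSemigroup S] (s t : S) : Prop := s = t * (star s * s)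

/-- `σ(s) = σ(t)` iff `s·e = t·e` for some idempotent `e`. -/
def sigmaEq {S : Type*} [InverseSemigroup S] (s t : S) : Prop :=
  ∃ e : S, e * e = e ∧ s * e = t * e

/-- `S` is E-unitary if every element above a nonzero idempotent is idempotent. -/
def EUnitary (S : Type*) [InverseSemigroup S] : Prop :=
  ∀ e s : S, e * e = e → nle e s → s * s = s

/-- The semilattice of idempotents of an inverse semigroup. -/
def Idem (S : Type*) [InverseSemigroup S] : Type _ := {e : S // e * e = e}

instance {S : Type*} [InverseSemigroup S] : Mul (Idem S) :=
  ⟨fun e f => ⟨e.1 * f.1, idem_mul e.2 f.2⟩⟩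

/-- A semi-character of a semilattice. -/
structure SemiChar (E : Type*) [Mul E] where
  toFun : E → Bool
  map_mul' : ∀ e f : E, toFun (e * f) = (toFun e && toFun f)
  exists_true : ∃ e : E, toFun e = true

/-- The space `Ê` of semi-characters, with the subspace topology from `Bool^E`. -/
instance {E : Type*} [Mul E] : TopologicalSpace (SemiChar E) :=
  TopologicalSpace.induced (fun χ => χ.toFun) Pi.topologicalSpace

/-- For `e` idempotent, `s*·e·s` is idempotent. -/
def conjIdem {S : Type*} [InverseSemigroup S] (s : S) (e : Idem S) : Idem S :=
  ⟨star s * e.1 * s, idem_conj e.2 s⟩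

/-- The semi-character `s·χ` defined by `(s·χ)(e) = χ(s*·e·s)`. -/
def sDot {S : Type*} [InverseSemigroup S] (s : S) (χ : SemiChar (Idem S))
    (h : χ.toFun ⟨star s * s, idem_star_mul s⟩ = true) : SemiChar (Idem S) where
  toFun e := χ.toFun (conjIdem s e)
  map_mul' e f := by
    have heq : conjIdem s (e * f) = conjIdem s e * conjIdem s f :=
      Subtype.ext (conj_mul e.2 f.2 s).symm
    simp only [heq, χ.map_mul']
  exists_true := ⟨⟨s * star s, mul_star_idem s⟩, by
    have heq : conjIdem s ⟨s * star s, mul_star_idem s⟩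
        = (⟨star s * s, idem_star_mul s⟩ : Idem S) := Subtype.ext (conj_ss s)
    simp only [heq]; exact h⟩

/-! Take `s' = s·g` with `g = (s*·e·s)·x·f`. Since `g` is an idempotent, `s' ≤ s` and
`s'*·s' = s*·s·g`, whose character value is the product of the four given `true` values;
`s·(s*·e·s) = e·s` gives `s' = e·s'·f`. In `T`, `φ(g) ≤ φ(x) ≤ v*·v`, so
`φ(s') = φ(s)·(v*·v)·φ(g) = v·φ(g) ≤ v ≤ t`. -/

namespace InverseSemigroup

variable {S : Type*} [InverseSemigroup S]

lemma star_eq_self_of_idem {e : S} (he : e * e = e) : star e = e := by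
  have hstar : star e * star e = star e := by rw [← star_mul, he]
  calc star e = star e * (e * e) * star e := by rw [he, star_mul_star_self]
    _ = (star e * e) * (e * star e) := by simp only [mul_assoc]
    _ = (e * star e) * (star e * e) := idem_comm _ _ (idem_star_mul e) (mul_star_idem e)
    _ = e * (star e * star e) * e := by simp only [mul_assoc]
    _ = e := by rw [hstar, mul_star_mul_self]

lemma star_mul_idem_mul_self (s : S) {g : S} (hg : g * g = g) :
    star (s * g) * (s * g) = star s * s * g := by
  calc star (s * g) * (s * g) = g * ((star s * s) * g) := by
        rw [star_mul, star_eq_self_of_idem hg]; simp only [mul_assoc]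
    _ = g * (g * (star s * s)) := by rw [idem_comm _ _ (idem_star_mul s) hg]
    _ = (star s * s) * g := by rw [← mul_assoc, hg, idem_comm _ _ hg (idem_star_mul s)]

lemma mul_conj_idem (s : S) {e : S} (he : e * e = e) : s * (star s * e * s) = e * s := by
  calc s * (star s * e * s) = ((s * star s) * e) * s := by simp only [mul_assoc]
    _ = (e * (s * star s)) * s := by rw [idem_comm _ _ (mul_star_idem s) he]
    _ = e * s := by rw [mul_assoc, mul_star_mul_self]

end InverseSemigroup

section NaturalOrder

variable {S T : Type*} [InverseSemigroup S] [InverseSemigroup T]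

lemma nle_mul_idem (s : S) {g : S} (hg : g * g = g) : nle (s * g) s := by
  show s * g = s * (star (s * g) * (s * g))
  rw [star_mul_idem_mul_self s hg, ← mul_assoc, ← mul_assoc, mul_star_mul_self]

lemma nle.trans {a b c : S} (hab : nle a b) (hbc : nle b c) : nle a c := by
  have hidem : (star b * b * (star a * a)) * (star b * b * (star a * a))
      = star b * b * (star a * a) := idem_mul (idem_star_mul b) (idem_star_mul a)
  have h := nle_mul_idem c hidem
  rwa [← mul_assoc, ← hbc, ← hab] at h

lemma nle.map {a b : S} (f : S →ₙ* T) (h : nle a b) : nle (f a) (f b) := by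
  have hidem : f (star a * a) * f (star a * a) = f (star a * a) := by
    rw [← map_mul, idem_star_mul]
  have h' := nle_mul_idem (f b) hidem
  rwa [← map_mul, ← h] at h'

lemma nle.eq_mul_of_idem {p q : S} (hp : p * p = p) (h : nle p q) : p = q * p := by
  rwa [nle, star_eq_self_of_idem hp, hp] at h

lemma nle_of_idem_of_mul_eq {g x : S} (hg : g * g = g) (hx : x * x = x) (h : g * x = g) :
    nle g x := by
  have h' := nle_mul_idem x hg
  rwa [← idem_comm _ _ hg hx, h] at h'

end NaturalOrder

lemma SemiChar.toFun_mul_eq_true {E : Type*} [Mul E] (χ : SemiChar E) {a b : E} :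
    χ.toFun (a * b) = true ↔ χ.toFun a = true ∧ χ.toFun b = true := by
  rw [χ.map_mul', Bool.and_eq_true]

theorem stmt15_general {S T : Type*} [InverseSemigroup S] [InverseSemigroup T]
    (φ : S → T) (hhom : ∀ x y : S, φ (x * y) = φ x * φ y)
    (e f : S) (he : e * e = e) (hf : f * f = f) (s : S) (t : T)
    (χ : SemiChar (Idem S))
    (hχs : χ.toFun ⟨star s * s, idem_star_mul s⟩ = true)
    (hχf : χ.toFun ⟨f, hf⟩ = true)
    (hχe : χ.toFun (conjIdem s ⟨e, he⟩) = true)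
    (hv : ∃ v : T, nle v (φ s) ∧ nle v t ∧
      ∃ x : Idem S, χ.toFun x = true ∧ nle (φ x.1) (star v * v)) :
    ∃ s' : S, nle s' s ∧ s' = e * s' * f ∧
      χ.toFun ⟨star s' * s', idem_star_mul s'⟩ = true ∧ nle (φ s') t := by
  obtain ⟨v, hvs, hvt, x, hχx, hxv⟩ := hv
  let Φ : S →ₙ* T := ⟨φ, hhom⟩
  let g : Idem S := conjIdem s ⟨e, he⟩ * x * ⟨f, hf⟩
  have hgx : g.1 * x.1 = g.1 := by
    show star s * e * s * x.1 * f * x.1 = star s * e * s * x.1 * f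
    rw [mul_assoc _ f, idem_comm f _ hf x.2, ← mul_assoc, mul_assoc _ x.1 x.1, x.2]
  have hφg : φ g.1 = star v * v * φ g.1 :=
    (((nle_of_idem_of_mul_eq g.2 x.2 hgx).map Φ).trans hxv).eq_mul_of_idem
      (by rw [← hhom, g.2])
  refine ⟨s * g.1, nle_mul_idem s g.2, ?_, ?_, ?_⟩
  · show s * (star s * e * s * x.1 * f) = e * (s * (star s * e * s * x.1 * f)) * f
    simp only [← mul_assoc, mul_conj_idem s he, he, mul_assoc _ f f, hf]
  · let ss : Idem S := ⟨star s * s, idem_star_mul s⟩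
    have hg : (⟨star (s * g.1) * (s * g.1), idem_star_mul _⟩ : Idem S) = ss * g :=
      Subtype.ext (star_mul_idem_mul_self s g.2)
    have hχg : χ.toFun g = true :=
      χ.toFun_mul_eq_true.2 ⟨χ.toFun_mul_eq_true.2 ⟨hχe, hχx⟩, hχf⟩
    rw [hg]
    exact χ.toFun_mul_eq_true.2 ⟨hχs, hχg⟩
  · have hφs' : φ (s * g.1) = v * φ g.1 :=
      calc φ (s * g.1) = φ s * (star v * v * φ g.1) := by rw [hhom, ← hφg]
        _ = v * φ g.1 := by rw [← mul_assoc, ← hvs]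
    rw [hφs']
    exact (nle_mul_idem v (by rw [← hhom, g.2])).trans hvt

theorem stmt15 {S T : Type*} [InverseSemigroup S] [InverseSemigroup T]
    (φ : S → T) (hhom : ∀ x y : S, φ (x * y) = φ x * φ y)
    (hstar : ∀ x : S, φ (star x) = star (φ x))
    (e f : S) (he : e * e = e) (hf : f * f = f) (s : S) (t : T)
    (χ : SemiChar (Idem S))
    (hχs : χ.toFun ⟨star s * s, idem_star_mul s⟩ = true)
    (hχf : χ.toFun ⟨f, hf⟩ = true)
    (hχe : χ.toFun (conjIdem s ⟨e, he⟩) = true)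
    (hv : ∃ v : T, nle v (φ s) ∧ nle v t ∧
      ∃ x : Idem S, χ.toFun x = true ∧ nle (φ x.1) (star v * v)) :
    ∃ s' : S, nle s' s ∧ s' = e * s' * f ∧
      χ.toFun ⟨star s' * s', idem_star_mul s'⟩ = true ∧ nle (φ s') t :=
  stmt15_general φ hhom e f he hf s t χ hχs hχf hχe hv
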